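/- The one-sided Mahavier dynamical system (I_{F_{1/2,3}}^+, σ^+_{F_{1/2,3}}) does not have the specification property. -/

import Mathlib

open Set Filter Topology

/-- One-sided Mahavier product of a relation `F` on `X`. -/
def MahavierPlus {X : Type*} (F : Set (X × X)) : Set (ℕ → X) :=
  {x | ∀ n : ℕ, (x n, x (n + 1)) ∈ F}

/-- Two-sided Mahavier product of a relation `F` on `X`. -/
def MahavierTwo {X : Type*} (F : Set (X × X)) : Set (ℤ → X) :=
  {x | ∀ n : ℤ, (x n, x (n + 1)) ∈ F}

/-- The shift map on the one-sided Mahavier product. -/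
def shiftPlus {X : Type*} (F : Set (X × X)) (x : MahavierPlus F) : MahavierPlus F :=
  ⟨fun n => (x : ℕ → X) (n + 1), fun n => x.2 (n + 1)⟩

/-- The shift map on the two-sided Mahavier product. -/
def shiftTwo {X : Type*} (F : Set (X × X)) (x : MahavierTwo F) : MahavierTwo F :=
  ⟨fun n => (x : ℤ → X) (n + 1), fun n => x.2 (n + 1)⟩

/-- The metric `D(x,y) = sup_{n ≥ 1} d(x_n, y_n)/2^n` on one-sided sequences
(coordinates are indexed from `0` here, so the weight is `2^(n+1)`). -/
noncomputable def DPlus {X : Type*} [PseudoMetricSpace X] (x y : ℕ → X) : ℝ :=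
  ⨆ n : ℕ, dist (x n) (y n) / 2 ^ (n + 1)

/-- The metric `D(x,y) = sup_{n ∈ ℤ} d(x_n, y_n)/2^{|n|}` on two-sided sequences. -/
noncomputable def DTwo {X : Type*} [PseudoMetricSpace X] (x y : ℤ → X) : ℝ :=
  ⨆ n : ℤ, dist (x n) (y n) / 2 ^ n.natAbs

/-- Topological transitivity. -/
def TopTransitive {Y : Type*} [TopologicalSpace Y] (f : Y → Y) : Prop :=
  ∀ U V : Set Y, IsOpen U → IsOpen V → U.Nonempty → V.Nonempty →
    ∃ n : ℕ, (f^[n] '' U ∩ V).Nonempty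

/-- Topological mixing. -/
def TopMixing {Y : Type*} [TopologicalSpace Y] (f : Y → Y) : Prop :=
  ∀ U V : Set Y, IsOpen U → IsOpen V → U.Nonempty → V.Nonempty →
    ∃ n₀ : ℕ, ∀ n : ℕ, n₀ ≤ n → (f^[n] '' U ∩ V).Nonempty

/-- The shadowing property for a map `f` with respect to a distance `dY`. -/
def ShadowingProp {Y : Type*} (dY : Y → Y → ℝ) (f : Y → Y) : Prop :=
  ∀ ε : ℝ, 0 < ε → ∃ δ : ℝ, 0 < δ ∧ ∀ x : ℕ → Y,
    (∀ k : ℕ, dY (f (x k)) (x (k + 1)) < δ) →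
    ∃ y : Y, ∀ k : ℕ, dY (f^[k] y) (x k) < ε

/-- The specification property for a map `f` with respect to a distance `dY`. -/
def SpecProp {Y : Type*} (dY : Y → Y → ℝ) (f : Y → Y) : Prop :=
  ∀ ε : ℝ, 0 < ε → ∃ N : ℕ, 0 < N ∧ ∀ n : ℕ, 0 < n →
    ∀ x : Fin n → Y, ∀ k l : Fin n → ℕ,
      (∀ i, k i ≤ l i) →
      (∀ i j : Fin n, (i : ℕ) + 1 = (j : ℕ) → l i + N ≤ k j) →
      ∃ y : Y, ∀ i : Fin n, ∀ m : ℕ, k i ≤ m → m ≤ l i →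
        dY (f^[m] y) (f^[m] (x i)) ≤ ε

/-- The CR-specification property for the one-sided Mahavier product of `F`. -/
def CRSpec {X : Type*} [PseudoMetricSpace X] (F : Set (X × X)) : Prop :=
  ∀ ε : ℝ, 0 < ε → ∃ N : ℕ, 0 < N ∧ ∀ n : ℕ, 0 < n →
    ∀ x : Fin n → MahavierPlus F, ∀ k l : Fin n → ℕ,
      (∀ i, k i ≤ l i) →
      (∀ i j : Fin n, (i : ℕ) + 1 = (j : ℕ) → l i + N ≤ k j) →
      ∃ y : MahavierPlus F, ∀ i : Fin n, ∀ m : ℕ, k i ≤ m → m ≤ l i →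
        dist ((x i : ℕ → X) m) ((y : ℕ → X) m) ≤ ε

/-- The image of a set under a relation. -/
def relImage {X : Type*} (F : Set (X × X)) (A : Set X) : Set X :=
  {y | ∃ a ∈ A, (a, y) ∈ F}

/-- Composition of relations. -/
def relComp {X : Type*} (F G : Set (X × X)) : Set (X × X) :=
  {p | ∃ z : X, (p.1, z) ∈ F ∧ (z, p.2) ∈ G}

/-- Iterated composition `F^n` of a relation with itself. -/
def relPow {X : Type*} (F : Set (X × X)) : ℕ → Set (X × X)
  | 0 => {p | p.1 = p.2}
  | n + 1 => relComp (relPow F n) F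

/-- The relation `F_{1/2,3} = {(x,3x) : 0 ≤ x ≤ 1/3} ∪ {(x,x/2) : 0 ≤ x ≤ 1}` on `I = [0,1]`. -/
def F23 : Set (ℝ × ℝ) :=
  {p | (p.1 ∈ Set.Icc (0 : ℝ) (1 / 3) ∧ p.2 = 3 * p.1) ∨
       (p.1 ∈ Set.Icc (0 : ℝ) 1 ∧ p.2 = p.1 / 2)}

/-!
Every step of a point of `I_F^+` for `F = F_{1/2,3}` multiplies the coordinate by `3` or by `1/2`,
so `y_g = y_0 · 6^a / 2^g` for some `a`. Specification with `ε = 1/20` and gap `N` produces, for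
`g = N` and for `g = N + 1`, a point whose coordinates `0` and `g` are both within `1/10` of `1`:
shadow, at time `0` and at time `g`, the "tent" points that triple up to `1` and then halve.
Then both `6^a / 2^N` and `6^b / 2^(N+1)` are close to `1`, so `6^(b-a)` is close to `2`, which is
impossible.
-/

section General

variable {X : Type*}

lemma shiftPlus_iterate_apply (F : Set (X × X)) (y : MahavierPlus F) (m n : ℕ) :
    (((shiftPlus F)^[m] y : MahavierPlus F) : ℕ → X) n = (y : ℕ → X) (n + m) := by
  induction m generalizing n with
  | zero => rfl
  | succ m ih =>
    rw [Function.iterate_succ_apply']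
    exact (ih (n + 1)).trans (congrArg _ (Nat.add_right_comm n 1 m))

lemma half_dist_le_DPlus [PseudoMetricSpace X] {u v : ℕ → X} {C : ℝ}
    (hb : ∀ n, dist (u n) (v n) ≤ C) : dist (u 0) (v 0) / 2 ≤ DPlus u v := by
  have hbdd : BddAbove (Set.range fun n : ℕ => dist (u n) (v n) / 2 ^ (n + 1)) := by
    refine ⟨C, ?_⟩
    rintro _ ⟨n, rfl⟩
    exact (div_le_self dist_nonneg (one_le_pow₀ one_le_two)).trans (hb n)
  have h := le_ciSup hbdd 0
  simp only [zero_add, pow_one] at h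
  exact h

lemma dist_le_two_mul_DPlus_shiftPlus_iterate [PseudoMetricSpace X] {F : Set (X × X)}
    {y z : MahavierPlus F} {C : ℝ} (hb : ∀ n, dist ((y : ℕ → X) n) ((z : ℕ → X) n) ≤ C)
    (m : ℕ) :
    dist ((y : ℕ → X) m) ((z : ℕ → X) m) ≤
      2 * DPlus (((shiftPlus F)^[m] y : MahavierPlus F) : ℕ → X)
        (((shiftPlus F)^[m] z : MahavierPlus F) : ℕ → X) := by
  have h := half_dist_le_DPlus (C := C) (u := (((shiftPlus F)^[m] y : MahavierPlus F) : ℕ → X))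
    (v := (((shiftPlus F)^[m] z : MahavierPlus F) : ℕ → X)) fun n => by
      rw [shiftPlus_iterate_apply, shiftPlus_iterate_apply]
      exact hb (n + m)
  simp only [shiftPlus_iterate_apply, zero_add] at h
  linarith

end General

lemma SpecProp.exists_close_at_zero_and_at {Y : Type*} {d : Y → Y → ℝ} {f : Y → Y}
    (hS : SpecProp d f) {ε : ℝ} (hε : 0 < ε) :
    ∃ N : ℕ, ∀ g, N ≤ g → ∀ p q : Y, ∃ y : Y, d y p ≤ ε ∧ d (f^[g] y) (f^[g] q) ≤ ε := by
  obtain ⟨N, -, hN⟩ := hS ε hε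
  refine ⟨N, fun g hg p q => ?_⟩
  obtain ⟨y, hy⟩ := hN 2 two_pos ![p, q] ![0, g] ![0, g] (fun _ => le_rfl) (by
    simp only [Fin.forall_fin_two]
    simp [hg])
  exact ⟨y, hy 0 0 le_rfl le_rfl, hy 1 g le_rfl le_rfl⟩

section F23

lemma mem_Icc_of_mem_mahavierPlus_F23 {y : ℕ → ℝ} (hy : y ∈ MahavierPlus F23) (n : ℕ) :
    y n ∈ Icc (0 : ℝ) 1 := by
  rcases hy n with ⟨⟨h0, h1⟩, _⟩ | ⟨h, _⟩
  · exact ⟨h0, by linarith⟩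
  · exact h

lemma exists_mul_two_pow_eq_mul_six_pow {y : ℕ → ℝ} (hy : y ∈ MahavierPlus F23) (g : ℕ) :
    ∃ a : ℕ, y g * 2 ^ g = y 0 * 6 ^ a := by
  induction g with
  | zero => exact ⟨0, by simp⟩
  | succ g ih =>
    obtain ⟨a, ha⟩ := ih
    rcases hy g with ⟨_, h : y (g + 1) = 3 * y g⟩ | ⟨_, h : y (g + 1) = y g / 2⟩
    · exact ⟨a + 1, by rw [h]; linear_combination 6 * ha⟩
    · exact ⟨a, by rw [h]; linear_combination ha⟩

noncomputable def tent (g j : ℕ) : ℝ :=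
  if j ≤ g then (3 : ℝ) ^ j / 3 ^ g else (1 / 2 : ℝ) ^ (j - g)

lemma tent_self (g : ℕ) : tent g g = 1 := by
  simp [tent]

lemma tent_mem_mahavierPlus_F23 (g : ℕ) : tent g ∈ MahavierPlus F23 := by
  intro n
  rcases Nat.lt_or_ge n g with hn | hn
  · have hn' : n ≤ g := hn.le
    have hpow : (3 : ℝ) ^ (n + 1) ≤ 3 ^ g := pow_le_pow_right₀ (by norm_num) hn
    left
    simp only [tent, if_pos hn', if_pos (show n + 1 ≤ g from hn), pow_succ]
    refine ⟨⟨by positivity, ?_⟩, by ring⟩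
    rw [div_le_iff₀ (by positivity)]
    rw [pow_succ] at hpow
    linarith
  · right
    have hnot : ¬ n + 1 ≤ g := by omega
    refine ⟨⟨?_, ?_⟩, ?_⟩
    · unfold tent; split_ifs <;> positivity
    · unfold tent
      split_ifs with h
      · exact (div_le_one (by positivity)).2 (pow_le_pow_right₀ (by norm_num) h)
      · exact pow_le_one₀ (by norm_num) (by norm_num)
    · rcases hn.eq_or_lt with rfl | hlt
      · simp [tent]
      · simp only [tent, if_neg hnot, if_neg (show ¬ n ≤ g by omega),
          show n + 1 - g = n - g + 1 by omega, pow_succ]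
        ring

lemma not_near_one_at_zero_and_succ {y y' : ℕ → ℝ} (hy : y ∈ MahavierPlus F23)
    (hy' : y' ∈ MahavierPlus F23) (N : ℕ) (h0 : |y 0 - 1| ≤ 1 / 10)
    (hN : |y N - 1| ≤ 1 / 10) (h0' : |y' 0 - 1| ≤ 1 / 10)
    (hN' : |y' (N + 1) - 1| ≤ 1 / 10) : False := by
  obtain ⟨a, ha⟩ := exists_mul_two_pow_eq_mul_six_pow hy N
  obtain ⟨b, hb⟩ := exists_mul_two_pow_eq_mul_six_pow hy' (N + 1)
  rw [abs_le] at h0 hN h0' hN'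
  have key : 2 * y' (N + 1) * y 0 * 6 ^ a = y' 0 * y N * 6 ^ b := by
    have h2N : (2 : ℝ) ^ N ≠ 0 := by positivity
    apply mul_right_cancel₀ h2N
    rw [pow_succ] at hb
    linear_combination y 0 * 6 ^ a * hb - y' 0 * 6 ^ b * ha
  have hs : 162 / 100 ≤ 2 * y' (N + 1) * y 0 ∧ 2 * y' (N + 1) * y 0 ≤ 242 / 100 :=
    ⟨by nlinarith, by nlinarith⟩
  have ht : 81 / 100 ≤ y' 0 * y N ∧ y' 0 * y N ≤ 121 / 100 := ⟨by nlinarith, by nlinarith⟩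
  have h6a : (0 : ℝ) < 6 ^ a := by positivity
  rcases le_or_gt b a with hba | hab
  · have : (6 : ℝ) ^ b ≤ 6 ^ a := pow_le_pow_right₀ (by norm_num) hba
    nlinarith
  · have : (6 : ℝ) ^ a * 6 ≤ 6 ^ b := by
      rw [← pow_succ]; exact pow_le_pow_right₀ (by norm_num) hab
    nlinarith

lemma exists_mem_near_one_at_zero_and_at
    (hS : SpecProp (fun a b : MahavierPlus F23 => DPlus (a : ℕ → ℝ) (b : ℕ → ℝ))
      (shiftPlus F23)) :
    ∃ N : ℕ, ∀ g, N ≤ g → ∃ y ∈ MahavierPlus F23, |y 0 - 1| ≤ 1 / 10 ∧ |y g - 1| ≤ 1 / 10 := by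
  obtain ⟨N, hN⟩ := hS.exists_close_at_zero_and_at (ε := 1 / 20) (by norm_num)
  refine ⟨N, fun g hg => ?_⟩
  obtain ⟨y, hy0, hyg⟩ := hN g hg ⟨tent 0, tent_mem_mahavierPlus_F23 0⟩
    ⟨tent g, tent_mem_mahavierPlus_F23 g⟩
  have hb (z : MahavierPlus F23) (n : ℕ) : dist ((y : ℕ → ℝ) n) ((z : ℕ → ℝ) n) ≤ 1 :=
    Real.dist_le_of_mem_Icc_01 (mem_Icc_of_mem_mahavierPlus_F23 y.2 n)
      (mem_Icc_of_mem_mahavierPlus_F23 z.2 n)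
  have h0 := dist_le_two_mul_DPlus_shiftPlus_iterate (hb ⟨tent 0, tent_mem_mahavierPlus_F23 0⟩) 0
  have hg' := dist_le_two_mul_DPlus_shiftPlus_iterate (hb ⟨tent g, tent_mem_mahavierPlus_F23 g⟩) g
  simp only [Function.iterate_zero, id, tent_self, Real.dist_eq] at h0 hg'
  exact ⟨y, y.2, by linarith, by linarith⟩

end F23

/-- The one-sided Mahavier system of `F_{1/2,3}` does not have the
specification property. -/
theorem stmt4 :
    ¬ SpecProp (fun a b : MahavierPlus F23 => DPlus (a : ℕ → ℝ) (b : ℕ → ℝ))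
        (shiftPlus F23) := by
  intro hS
  obtain ⟨N, hN⟩ := exists_mem_near_one_at_zero_and_at hS
  obtain ⟨y, hy, hy0, hyN⟩ := hN N le_rfl
  obtain ⟨y', hy', hy'0, hy'N⟩ := hN (N + 1) N.le_succ
  exact not_near_one_at_zero_and_succ hy hy' N hy0 hyN hy'0 hy'N
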